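/- arXiv:1504.05025 — 7 statements merged into one kernel-verified Lean document; each statement's English description precedes it below -/
import Mathlib

section
/- Let γ_μ > 0 and γ_m > 0 be the μWave and mmWave spectral efficiencies, W > 0 the total μWave bandwidth, W_m > 0 the mmWave bandwidth, and 0 < T ≤ 1 the minimum uplink-to-downlink rate ratio. If W ≥ T·W_m·γ_m/γ_μ, then the allocation W_{μ.u}* = (T/(1+T))·(W + W_m·γ_m/γ_μ) and W_{μ.d}* = (1/(1+T))·(W − T·W_m·γ_m/γ_μ) satisfies 0 ≤ W_{μ.d}*, W_{μ.u}* ≤ W, W_{μ.d}* + W_{μ.u}* = W, satisfies the uplink constraint W_{μ.u}*·γ_μ ≥ T·(W_{μ.d}*·γ_μ + W_m·γ_m) with equality, and maximizes the downlink rate: for every pair (W_d, W_u) of nonnegative reals with W_d + W_u = W and W_u·γ_μ ≥ T·(W_d·γ_μ + W_m·γ_m), one has W_d·γ_μ + W_m·γ_m ≤ W_{μ.d}*·γ_μ + W_m·γ_m. -/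
/-- Proposition 3 (μWave Resource Allocation), feasible case: the stated allocation
is admissible, meets the uplink constraint with equality, and maximizes the
downlink rate `W_d·γ_μ + W_m·γ_m`. -/
theorem muWave_resource_allocation
    (γμ γm W Wm T : ℝ)
    (hγμ : 0 < γμ) (hγm : 0 < γm) (hW : 0 < W) (hWm : 0 < Wm)
    (hT0 : 0 < T) (hT1 : T ≤ 1)
    (hfeas : W ≥ T * Wm * γm / γμ)
    (Wu_star Wd_star : ℝ)
    (hWu_def : Wu_star = T / (1 + T) * (W + Wm * γm / γμ))
    (hWd_def : Wd_star = 1 / (1 + T) * (W - T * Wm * γm / γμ)) :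
    0 ≤ Wd_star ∧ Wd_star ≤ W ∧ 0 ≤ Wu_star ∧ Wu_star ≤ W ∧
    Wd_star + Wu_star = W ∧
    Wu_star * γμ = T * (Wd_star * γμ + Wm * γm) ∧
    ∀ Wd Wu : ℝ, 0 ≤ Wd → 0 ≤ Wu → Wd + Wu = W →
      Wu * γμ ≥ T * (Wd * γμ + Wm * γm) →
      Wd * γμ + Wm * γm ≤ Wd_star * γμ + Wm * γm := by
  have hγμ' := hγμ.ne'
  have h1T : (0:ℝ) < 1 + T := by linarith
  have hK : 0 ≤ Wm * γm / γμ := by positivity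
  have hsub : 0 ≤ W - T * Wm * γm / γμ := by linarith
  have hKpos : 0 < Wm * γm / γμ := by positivity
  have hd0 : 0 ≤ Wd_star := by
    rw [hWd_def]; positivity
  have hu0 : 0 ≤ Wu_star := by
    rw [hWu_def]; positivity
  have hsum : Wd_star + Wu_star = W := by
    rw [hWd_def, hWu_def]; field_simp; ring
  refine ⟨hd0, by linarith, hu0, by linarith, hsum, ?_, ?_⟩
  · rw [hWd_def, hWu_def]
    field_simp
    ring
  · intro Wd Wu hWd hWu hWsum hcon
    have hWu_eq : Wu = W - Wd := by linarith
    rw [hWu_eq] at hcon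
    have hγ : T * (Wm * γm / γμ) * γμ = T * (Wm * γm) := by
      field_simp
    have hd_le : Wd ≤ Wd_star := by
      rw [hWd_def]
      rw [div_mul_eq_mul_div, le_div_iff₀ h1T]
      have h2 : (W - T * Wm * γm / γμ) * γμ = W * γμ - T * (Wm * γm) := by
        field_simp
      have key : Wd * (1 + T) * γμ ≤ (W - T * Wm * γm / γμ) * γμ := by
        rw [h2]; nlinarith [hcon]
      exact le_of_mul_le_mul_right (by linarith) hγμ
    have := mul_le_mul_of_nonneg_right hd_le hγμ.le
    linarith
end

section
/- The function s ↦ ρ_s := ∫₀^∞ du/(1 + u^s) is strictly decreasing on (1, ∞): for all 1 < s₁ < s₂, ρ_{s₂} < ρ_{s₁}. -/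
/-!
Split `(0, ∞)` at `1` and substitute `u = x⁻¹` on `(0, 1)`. Since
`1 / (1 + x⁻¹ ^ s) = 1 - 1 / (1 + x ^ s)`, this folds `ρ_s` into
`∫_{x > 1} ((x ^ 2)⁻¹ + (1 - (x ^ 2)⁻¹) / (1 + x ^ s)) dx`, whose integrand is strictly decreasing
in `s` for each `x > 1`; for `s > 1` all the integrals converge.
-/

open MeasureTheory Set Real

section InvChangeOfVariables

variable {E : Type*} [NormedAddCommGroup E] [NormedSpace ℝ E]

private lemma hasDerivWithinAt_inv_Ioi {a : ℝ} (ha : 0 < a) :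
    ∀ x ∈ Ioi a, HasDerivWithinAt (·⁻¹) (-(x ^ 2)⁻¹) (Ioi a) x :=
  fun _ hx => (hasDerivAt_inv (ha.trans hx).ne').hasDerivWithinAt

private lemma image_inv_Ioi {a : ℝ} (ha : 0 < a) : (·⁻¹) '' Ioi a = Ioo 0 a⁻¹ := by
  rw [image_inv_eq_inv, inv_Ioi₀ ha]

theorem integral_comp_inv_Ioi (g : ℝ → E) {a : ℝ} (ha : 0 < a) :
    ∫ x in Ioi a, (x ^ 2)⁻¹ • g x⁻¹ = ∫ y in Ioo 0 a⁻¹, g y := by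
  rw [← image_inv_Ioi ha, integral_image_eq_integral_abs_deriv_smul measurableSet_Ioi
    (hasDerivWithinAt_inv_Ioi ha) inv_injective.injOn]
  simp

theorem integrableOn_comp_inv_Ioi (g : ℝ → E) {a : ℝ} (ha : 0 < a) :
    IntegrableOn (fun x => (x ^ 2)⁻¹ • g x⁻¹) (Ioi a) ↔ IntegrableOn g (Ioo 0 a⁻¹) := by
  rw [← image_inv_Ioi ha, integrableOn_image_iff_integrableOn_abs_deriv_smul measurableSet_Ioi
    (hasDerivWithinAt_inv_Ioi ha) inv_injective.injOn]
  simp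

theorem integral_Ioi_zero_eq_integral_Ioi_one_add_comp_inv {f : ℝ → E}
    (hf : IntegrableOn f (Ioi 0)) :
    ∫ u in Ioi 0, f u = ∫ x in Ioi 1, (f x + (x ^ 2)⁻¹ • f x⁻¹) := by
  have hIoo : IntegrableOn f (Ioo 0 1⁻¹) := by simpa using hf.mono_set Ioo_subset_Ioi_self
  have hIoi : IntegrableOn f (Ioi 1) := hf.mono_set (Ioi_subset_Ioi zero_le_one)
  rw [integral_add hIoi ((integrableOn_comp_inv_Ioi f one_pos).2 hIoo),
    integral_comp_inv_Ioi f one_pos, inv_one, ← integral_Ioc_eq_integral_Ioo, add_comm,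
    ← setIntegral_union (Ioc_disjoint_Ioi le_rfl) measurableSet_Ioi
      (hf.mono_set Ioc_subset_Ioi_self) hIoi, Ioc_union_Ioi_eq_Ioi zero_le_one]

theorem integrableOn_Ioi_one_add_comp_inv {f : ℝ → E} (hf : IntegrableOn f (Ioi 0)) :
    IntegrableOn (fun x => f x + (x ^ 2)⁻¹ • f x⁻¹) (Ioi 1) :=
  (hf.mono_set (Ioi_subset_Ioi zero_le_one)).add <|
    (integrableOn_comp_inv_Ioi f one_pos).2 (by simpa using hf.mono_set Ioo_subset_Ioi_self)

end InvChangeOfVariables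

theorem setIntegral_lt_setIntegral_of_forall_lt {X : Type*} [MeasurableSpace X] {μ : Measure X}
    {s : Set X} {f g : X → ℝ} (hs : MeasurableSet s) (hμs : μ s ≠ 0) (hf : IntegrableOn f s μ)
    (hg : IntegrableOn g s μ) (hlt : ∀ x ∈ s, f x < g x) :
    ∫ x in s, f x ∂μ < ∫ x in s, g x ∂μ := by
  have hpos : ∀ x ∈ s, 0 < g x - f x := fun x hx => sub_pos.2 (hlt x hx)
  rw [← sub_pos, ← integral_sub hg hf, setIntegral_pos_iff_support_of_nonneg_ae
    ((ae_restrict_iff' hs).2 (ae_of_all _ fun x hx => (hpos x hx).le)) (hg.sub hf),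
    inter_eq_self_of_subset_right fun x hx => Function.mem_support.2 (hpos x hx).ne']
  exact pos_iff_ne_zero.2 hμs

theorem integrableOn_Ioi_zero_one_div_one_add_rpow {s : ℝ} (hs : 1 < s) :
    IntegrableOn (fun u : ℝ => 1 / (1 + u ^ s)) (Ioi 0) := by
  have hmeas : AEStronglyMeasurable (fun u : ℝ => 1 / (1 + u ^ s)) :=
    (by fun_prop : Measurable (fun u : ℝ => 1 / (1 + u ^ s))).aestronglyMeasurable
  rw [← Ioc_union_Ioi_eq_Ioi zero_le_one]
  refine IntegrableOn.union ?_ ?_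
  · refine Measure.integrableOn_of_bounded (M := 1) (by simp) hmeas ?_
    filter_upwards [ae_restrict_mem measurableSet_Ioc] with u hu
    have := rpow_pos_of_pos hu.1 s
    rw [norm_of_nonneg (by positivity), div_le_one (by positivity)]
    linarith
  · refine (integrableOn_Ioi_rpow_of_lt (neg_lt_neg hs) one_pos).mono' hmeas.restrict ?_
    filter_upwards [ae_restrict_mem measurableSet_Ioi] with x hx
    have hx0 : (0 : ℝ) < x := zero_lt_one.trans hx
    have := rpow_pos_of_pos hx0 s
    rw [norm_of_nonneg (by positivity), rpow_neg hx0.le, one_div]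
    gcongr
    linarith

theorem one_div_one_add_inv_rpow {x : ℝ} (hx : 0 < x) (s : ℝ) :
    1 / (1 + x⁻¹ ^ s) = 1 - 1 / (1 + x ^ s) := by
  have := rpow_pos_of_pos hx s
  rw [inv_rpow hx.le]
  field_simp
  ring

theorem strictAnti_one_div_one_add_rpow {x : ℝ} (hx : 1 < x) :
    StrictAnti fun s : ℝ => 1 / (1 + x ^ s) := by
  intro s₁ s₂ hs
  have := rpow_pos_of_pos (zero_lt_one.trans hx) s₁
  dsimp only
  gcongr
  exact rpow_lt_rpow_of_exponent_lt hx hs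

theorem strictAnti_one_div_one_add_rpow_add_comp_inv {x : ℝ} (hx : 1 < x) :
    StrictAnti fun s : ℝ => 1 / (1 + x ^ s) + (x ^ 2)⁻¹ • (1 / (1 + x⁻¹ ^ s)) := by
  intro s₁ s₂ hs
  have hx2 : (x ^ 2)⁻¹ < 1 := inv_lt_one_of_one_lt₀ (one_lt_pow₀ hx two_ne_zero)
  -- the integrand is `(x ^ 2)⁻¹ + (1 - (x ^ 2)⁻¹) / (1 + x ^ s)`
  simp only [one_div_one_add_inv_rpow (zero_lt_one.trans hx), smul_eq_mul]
  nlinarith [strictAnti_one_div_one_add_rpow hx hs]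

/-- The map `s ↦ ρ_s = ∫₀^∞ du/(1 + u^s)` is strictly decreasing on `(1, ∞)`. -/
theorem rho_strictAnti
    (s₁ s₂ : ℝ) (hs₁ : 1 < s₁) (hs : s₁ < s₂) :
    ∫ u in Set.Ioi (0 : ℝ), 1 / (1 + u ^ s₂) <
      ∫ u in Set.Ioi (0 : ℝ), 1 / (1 + u ^ s₁) := by
  have hint₁ := integrableOn_Ioi_zero_one_div_one_add_rpow hs₁
  have hint₂ := integrableOn_Ioi_zero_one_div_one_add_rpow (hs₁.trans hs)
  rw [integral_Ioi_zero_eq_integral_Ioi_one_add_comp_inv hint₁,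
    integral_Ioi_zero_eq_integral_Ioi_one_add_comp_inv hint₂]
  exact setIntegral_lt_setIntegral_of_forall_lt measurableSet_Ioi (by simp)
    (integrableOn_Ioi_one_add_comp_inv hint₂) (integrableOn_Ioi_one_add_comp_inv hint₁)
    fun x hx => strictAnti_one_div_one_add_rpow_add_comp_inv hx hs
end

section
/- Let W, W_m, T, α_μ, α_m, λ_g, S, c₁, c₂, p be positive reals with α_m > 2, and set β = (α_m/2 − 1)·e^{−λ_g·S} + 1. Suppose there exists Λ such that for all λ ≥ Λ, W·log(1 + c₁·λ^{α_μ/2}) ≥ T·W_m·log(1 + c₂·(p·λ)^{β}). Then W·(α_μ/2) ≥ T·W_m·β; equivalently, W ≥ (T·W_m/α_μ)·((α_m − 2)·e^{−λ_g·S} + 2). -/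
lemma log_split_aux (x b c : ℝ) (hx : 0 < x) (hc : 0 < c) :
    Real.log (1 + c * x ^ b) = b * Real.log x + Real.log (x ^ (-b) + c) := by
  have h1 : (1 : ℝ) + c * x ^ b = x ^ b * (x ^ (-b) + c) := by
    rw [mul_add, ← Real.rpow_add hx]
    simp [mul_comm]
  rw [h1, Real.log_mul (ne_of_gt (Real.rpow_pos_of_pos hx b))
      (ne_of_gt (by positivity)), Real.log_rpow hx]

/-- Corollary 2 (Required μWave Resource): if the uplink feasibility
`W·log(1 + c₁·λ^{α_μ/2}) ≥ T·W_m·log(1 + c₂·(p·λ)^β)` holds for all large `λ`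
(mmWave density scaling linearly with μWave density, `λ_m = p·λ_μ`), where
`β = (α_m/2 − 1)·e^{−λ_g·S} + 1`, then
`W·(α_μ/2) ≥ T·W_m·β`, equivalently
`W ≥ (T·W_m/α_μ)·((α_m − 2)·e^{−λ_g·S} + 2)`. -/
theorem required_muWave_resource
    (W Wm T αμ αm lamg S c₁ c₂ p β : ℝ)
    (hW : 0 < W) (hWm : 0 < Wm) (hT : 0 < T) (hαμ : 0 < αμ) (hαm2 : 2 < αm)
    (hlamg : 0 < lamg) (hS : 0 < S) (hc₁ : 0 < c₁) (hc₂ : 0 < c₂) (hp : 0 < p)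
    (hβ : β = (αm / 2 - 1) * Real.exp (-(lamg * S)) + 1)
    (hfeas : ∃ Λ : ℝ, ∀ lam : ℝ, Λ ≤ lam →
      W * Real.log (1 + c₁ * lam ^ (αμ / 2)) ≥
        T * Wm * Real.log (1 + c₂ * (p * lam) ^ β)) :
    W * (αμ / 2) ≥ T * Wm * β ∧
    W ≥ T * Wm / αμ * ((αm - 2) * Real.exp (-(lamg * S)) + 2) := by
  obtain ⟨Λ, hΛ⟩ := hfeas
  have hE : 0 < Real.exp (-(lamg * S)) := Real.exp_pos _
  have hβpos : 0 < β := by nlinarith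
  have h1 : W * (αμ / 2) ≥ T * Wm * β := by
    by_contra hcon
    push_neg at hcon
    set ε : ℝ := T * Wm * β - W * (αμ / 2) with hεdef
    have hε : 0 < ε := by simp [hεdef]; linarith
    set C : ℝ := W * Real.log (1 + c₁) - T * Wm * (β * Real.log p)
        - T * Wm * Real.log c₂ with hCdef
    set lam : ℝ := max (max Λ 1) (Real.exp ((C + 1) / ε)) with hlamdef
    have hlam1 : (1 : ℝ) ≤ lam := le_trans (le_max_right _ _) (le_max_left _ _)
    have hlam0 : 0 < lam := lt_of_lt_of_le one_pos hlam1
    have h := hΛ lam (le_trans (le_max_left _ _) (le_max_left _ _))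
    rw [log_split_aux lam (αμ / 2) c₁ hlam0 hc₁,
        log_split_aux (p * lam) β c₂ (by positivity) hc₂,
        Real.log_mul (ne_of_gt hp) (ne_of_gt hlam0)] at h
    have hb1 : Real.log (lam ^ (-(αμ / 2)) + c₁) ≤ Real.log (1 + c₁) := by
      apply Real.log_le_log (by positivity)
      have : lam ^ (-(αμ / 2)) ≤ 1 :=
        Real.rpow_le_one_of_one_le_of_nonpos hlam1 (by linarith)
      linarith
    have hb2 : Real.log c₂ ≤ Real.log ((p * lam) ^ (-β) + c₂) := by
      apply Real.log_le_log hc₂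
      have : 0 < (p * lam) ^ (-β) := Real.rpow_pos_of_pos (by positivity) _
      linarith
    have hloglam : (C + 1) / ε ≤ Real.log lam := by
      calc (C + 1) / ε = Real.log (Real.exp ((C + 1) / ε)) := (Real.log_exp _).symm
        _ ≤ Real.log lam := Real.log_le_log (Real.exp_pos _) (le_max_right _ _)
    have m1 : W * Real.log (lam ^ (-(αμ / 2)) + c₁) ≤ W * Real.log (1 + c₁) :=
      mul_le_mul_of_nonneg_left hb1 hW.le
    have m2 : T * Wm * Real.log c₂ ≤ T * Wm * Real.log ((p * lam) ^ (-β) + c₂) :=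
      mul_le_mul_of_nonneg_left hb2 (by positivity)
    have m3 : C + 1 ≤ ε * Real.log lam := by
      have := mul_le_mul_of_nonneg_left hloglam hε.le
      rwa [mul_div_cancel₀ _ (ne_of_gt hε)] at this
    rw [hεdef, hCdef] at m3
    nlinarith [h, m1, m2, m3]
  refine ⟨h1, ?_⟩
  rw [ge_iff_le, div_mul_eq_mul_div, div_le_iff₀ hαμ]
  subst hβ
  nlinarith [h1]
end

section
/- Let W, W_m, T, α_μ, c₁, c₂, c, β be positive reals and set κ = (α_μ·W)/(2·T·W_m·β). If 0 < κ' < κ, then there exists Λ such that for all λ ≥ Λ, W·log(1 + c₁·λ^{α_μ/2}) ≥ T·W_m·log(1 + c₂·(c·λ^{κ'})^{β}). -/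
/-- Proposition 4 (Required μWave BS), sufficiency direction: if the mmWave BS
density grows like `c·λ^{κ'}` with `κ' < κ = α_μ·W/(2·T·W_m·β)`, then the uplink
rate requirement `W·log(1 + c₁·λ^{α_μ/2}) ≥ T·W_m·log(1 + c₂·(c·λ^{κ'})^β)` is
eventually satisfied. -/
theorem required_muWave_BS_sufficiency
    (W Wm T αμ c₁ c₂ c β κ κ' : ℝ)
    (hW : 0 < W) (hWm : 0 < Wm) (hT : 0 < T) (hαμ : 0 < αμ)
    (hc₁ : 0 < c₁) (hc₂ : 0 < c₂) (hc : 0 < c) (hβ : 0 < β)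
    (hκ : κ = αμ * W / (2 * T * Wm * β))
    (hκ'0 : 0 < κ') (hκ' : κ' < κ) :
    ∃ Λ : ℝ, ∀ lam : ℝ, Λ ≤ lam →
      W * Real.log (1 + c₁ * lam ^ (αμ / 2)) ≥
        T * Wm * Real.log (1 + c₂ * (c * lam ^ κ') ^ β) := by
  have hδ : 0 < W * (αμ / 2) - T * Wm * (κ' * β) := by
    have h1 : T * Wm * β * κ' < T * Wm * β * κ :=
      mul_lt_mul_of_pos_left hκ' (by positivity)
    rw [hκ] at h1
    have h2 : T * Wm * β * (αμ * W / (2 * T * Wm * β)) = W * (αμ / 2) := by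
      field_simp
    rw [h2] at h1
    nlinarith
  set A : ℝ := 1 + c₂ * c ^ β with hA
  have hA0 : 0 < A := by positivity
  set δ : ℝ := W * (αμ / 2) - T * Wm * (κ' * β) with hδdef
  refine ⟨max 1 (Real.exp ((T * Wm * Real.log A - W * Real.log c₁) / δ)),
    fun lam hlam => ?_⟩
  have hlam1 : (1 : ℝ) ≤ lam := le_trans (le_max_left _ _) hlam
  have hlam0 : 0 < lam := lt_of_lt_of_le one_pos hlam1
  have hlog : (T * Wm * Real.log A - W * Real.log c₁) / δ ≤ Real.log lam := by
    calc (T * Wm * Real.log A - W * Real.log c₁) / δ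
        = Real.log (Real.exp ((T * Wm * Real.log A - W * Real.log c₁) / δ)) :=
          (Real.log_exp _).symm
      _ ≤ Real.log lam := by
          apply Real.log_le_log (Real.exp_pos _)
          exact le_trans (le_max_right _ _) hlam
  -- lower bound for LHS
  have hL : W * (Real.log c₁ + (αμ / 2) * Real.log lam)
      ≤ W * Real.log (1 + c₁ * lam ^ (αμ / 2)) := by
    apply mul_le_mul_of_nonneg_left _ hW.le
    have : Real.log c₁ + (αμ / 2) * Real.log lam
        = Real.log (c₁ * lam ^ (αμ / 2)) := by
      rw [Real.log_mul hc₁.ne' (by positivity), Real.log_rpow hlam0]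
    rw [this]
    apply Real.log_le_log (by positivity)
    linarith [mul_pos hc₁ (Real.rpow_pos_of_pos hlam0 (αμ / 2))]
  -- upper bound for RHS
  have hpow1 : (1 : ℝ) ≤ lam ^ (κ' * β) :=
    Real.one_le_rpow hlam1 (by positivity)
  have hR : T * Wm * Real.log (1 + c₂ * (c * lam ^ κ') ^ β)
      ≤ T * Wm * (Real.log A + (κ' * β) * Real.log lam) := by
    apply mul_le_mul_of_nonneg_left _ (by positivity)
    have heq : (c * lam ^ κ') ^ β = c ^ β * lam ^ (κ' * β) := by
      rw [Real.mul_rpow hc.le (by positivity), ← Real.rpow_mul hlam0.le]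
    have h3 : 1 + c₂ * (c * lam ^ κ') ^ β ≤ A * lam ^ (κ' * β) := by
      rw [heq, hA]
      have : (1 + c₂ * c ^ β) * lam ^ (κ' * β)
          = lam ^ (κ' * β) + c₂ * c ^ β * lam ^ (κ' * β) := by ring
      rw [this]
      have : c₂ * (c ^ β * lam ^ (κ' * β)) = c₂ * c ^ β * lam ^ (κ' * β) := by ring
      linarith
    calc Real.log (1 + c₂ * (c * lam ^ κ') ^ β)
        ≤ Real.log (A * lam ^ (κ' * β)) := Real.log_le_log (by positivity) h3
      _ = Real.log A + (κ' * β) * Real.log lam := by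
          rw [Real.log_mul hA0.ne' (by positivity), Real.log_rpow hlam0]
  have hkey : T * Wm * Real.log A - W * Real.log c₁
      ≤ Real.log lam * (W * (αμ / 2) - T * Wm * (κ' * β)) := by
    rw [← hδdef]; exact (div_le_iff₀ hδ).mp hlog
  nlinarith [hkey, hL, hR]
end

section
/- Let W, W_m, T, α_μ, c₁, c₂, c, β be positive reals and set κ = (α_μ·W)/(2·T·W_m·β). If κ' > κ, then there exists Λ such that for all λ ≥ Λ, W·log(1 + c₁·λ^{α_μ/2}) < T·W_m·log(1 + c₂·(c·λ^{κ'})^{β}). -/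
/-- Proposition 4 (Required μWave BS), necessity direction: if the mmWave BS
density grows like `c·λ^{κ'}` with `κ' > κ = α_μ·W/(2·T·W_m·β)`, then the uplink
rate requirement eventually fails:
`W·log(1 + c₁·λ^{α_μ/2}) < T·W_m·log(1 + c₂·(c·λ^{κ'})^β)` for all large `λ`. -/
theorem required_muWave_BS_necessity
    (W Wm T αμ c₁ c₂ c β κ κ' : ℝ)
    (hW : 0 < W) (hWm : 0 < Wm) (hT : 0 < T) (hαμ : 0 < αμ)
    (hc₁ : 0 < c₁) (hc₂ : 0 < c₂) (hc : 0 < c) (hβ : 0 < β)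
    (hκ : κ = αμ * W / (2 * T * Wm * β))
    (hκ' : κ < κ') :
    ∃ Λ : ℝ, ∀ lam : ℝ, Λ ≤ lam →
      W * Real.log (1 + c₁ * lam ^ (αμ / 2)) <
        T * Wm * Real.log (1 + c₂ * (c * lam ^ κ') ^ β) := by
  set A : ℝ := W * Real.log (1 + c₁) with hA
  set B : ℝ := T * Wm * (Real.log c₂ + β * Real.log c) with hB
  set p : ℝ := W * (αμ / 2) with hp
  set q : ℝ := T * Wm * (κ' * β) with hq
  have hqp : p < q := by
    have hpe : p = T * Wm * (κ * β) := by
      rw [hp, hκ]; field_simp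
    rw [hpe, hq]
    have : κ * β < κ' * β := by
      exact mul_lt_mul_of_pos_right hκ' hβ
    nlinarith [mul_pos hT hWm]
  refine ⟨max 1 (Real.exp ((A - B) / (q - p) + 1)), fun lam hlam => ?_⟩
  have hlam1 : (1 : ℝ) ≤ lam := le_trans (le_max_left _ _) hlam
  have hlampos : 0 < lam := lt_of_lt_of_le one_pos hlam1
  have hlog : (A - B) / (q - p) + 1 ≤ Real.log lam := by
    have := le_trans (le_max_right 1 (Real.exp ((A - B) / (q - p) + 1))) hlam
    calc (A - B) / (q - p) + 1 = Real.log (Real.exp ((A - B) / (q - p) + 1)) := (Real.log_exp _).symm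
      _ ≤ Real.log lam := Real.log_le_log (Real.exp_pos _) this
  -- upper bound on LHS
  have hrpow1 : (1 : ℝ) ≤ lam ^ (αμ / 2) := Real.one_le_rpow hlam1 (by positivity)
  have hub : Real.log (1 + c₁ * lam ^ (αμ / 2)) ≤ Real.log (1 + c₁) + (αμ / 2) * Real.log lam := by
    have h1 : 1 + c₁ * lam ^ (αμ / 2) ≤ (1 + c₁) * lam ^ (αμ / 2) := by nlinarith
    calc Real.log (1 + c₁ * lam ^ (αμ / 2)) ≤ Real.log ((1 + c₁) * lam ^ (αμ / 2)) := by
          apply Real.log_le_log (by positivity) h1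
      _ = Real.log (1 + c₁) + (αμ / 2) * Real.log lam := by
          rw [Real.log_mul (by positivity) (by positivity), Real.log_rpow hlampos]
  -- lower bound on RHS
  have hlb : Real.log c₂ + β * Real.log c + (κ' * β) * Real.log lam ≤
      Real.log (1 + c₂ * (c * lam ^ κ') ^ β) := by
    have hpos : 0 < c₂ * (c * lam ^ κ') ^ β := by positivity
    have h2 : c₂ * (c * lam ^ κ') ^ β ≤ 1 + c₂ * (c * lam ^ κ') ^ β := by linarith
    calc Real.log c₂ + β * Real.log c + (κ' * β) * Real.log lam
        = Real.log (c₂ * (c * lam ^ κ') ^ β) := by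
          rw [Real.log_mul (ne_of_gt hc₂) (by positivity),
            Real.log_rpow (by positivity), Real.log_mul (ne_of_gt hc) (by positivity),
            Real.log_rpow hlampos]
          ring
      _ ≤ Real.log (1 + c₂ * (c * lam ^ κ') ^ β) := Real.log_le_log hpos h2
  have hmid : A + p * Real.log lam < B + q * Real.log lam := by
    have h3 : (A - B) / (q - p) < Real.log lam := by linarith
    have h4 : A - B < (q - p) * Real.log lam := by
      have := (div_lt_iff₀ (by linarith : (0:ℝ) < q - p)).mp h3
      linarith [this]
    nlinarith
  calc W * Real.log (1 + c₁ * lam ^ (αμ / 2))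
      ≤ A + p * Real.log lam := by
        rw [hA, hp]
        nlinarith [hub]
    _ < B + q * Real.log lam := hmid
    _ ≤ T * Wm * Real.log (1 + c₂ * (c * lam ^ κ') ^ β) := by
        rw [hB, hq]
        nlinarith [hlb, mul_pos hT hWm]
end

section
/- Let c > 0, k > 0, s > 0, and 0 ≤ S₁ < S₂. Define h_S(λ) = (1 − √(S/λ))·log(1 + c·e^{k·S}·λ^s) for λ > 0. Then there exists Λ such that for all λ ≥ Λ, h_{S₂}(λ) > h_{S₁}(λ). -/
/-!
For `a > 0` the spectral efficiency `(1 - √(S/λ)) · log (1 + a λ^s)` equals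
`log a + s log λ + o(1)`: the logarithm is `log (a λ^s) + o(1)`, and the blockage factor only costs
`√(S/λ) · o(√λ) = o(1)`. With `a = c e^{kS}` this reads `log c + k S + s log λ + o(1)`, so
`h_{S₂}(λ) - h_{S₁}(λ) → k (S₂ - S₁) > 0`.
-/

open Filter Real Topology Asymptotics

variable {a s : ℝ}

lemma tendsto_log_one_add_mul_rpow_sub (ha : 0 < a) (hs : 0 < s) :
    Tendsto (fun x => log (1 + a * x ^ s) - (log a + s * log x)) atTop (𝓝 0) := by
  have hpow : Tendsto (fun x : ℝ => a * x ^ s) atTop atTop :=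
    (tendsto_rpow_atTop hs).const_mul_atTop ha
  refine ((tendsto_log_comp_add_sub_log 1).comp hpow).congr' ?_
  filter_upwards [eventually_gt_atTop 0] with x hx
  rw [Function.comp_apply, add_comm _ (1 : ℝ), log_mul ha.ne' (rpow_pos_of_pos hx s).ne',
    log_rpow hx]

lemma isLittleO_log_one_add_mul_rpow (ha : 0 < a) (hs : 0 < s) {r : ℝ} (hr : 0 < r) :
    (fun x => log (1 + a * x ^ s)) =o[atTop] fun x => x ^ r := by
  have hbdd : (fun x => log (1 + a * x ^ s) - s * log x) =O[atTop] fun _ => (1 : ℝ) := by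
    refine (((tendsto_log_one_add_mul_rpow_sub ha hs).add_const (log a)).isBigO_one ℝ).congr_left
      fun x => ?_
    ring
  have hone : (fun _ => (1 : ℝ)) =o[atTop] fun x => x ^ r :=
    (isLittleO_one_left_iff ℝ).2 (tendsto_norm_atTop_atTop.comp (tendsto_rpow_atTop hr))
  simpa using (hbdd.trans_isLittleO hone).add ((isLittleO_log_rpow_atTop hr).const_mul_left s)

lemma tendsto_sqrt_div_mul_of_isLittleO_sqrt {f : ℝ → ℝ} (S : ℝ) (hf : f =o[atTop] (√·)) :
    Tendsto (fun x => √(S / x) * f x) atTop (𝓝 0) := by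
  have := hf.tendsto_div_nhds_zero.const_mul √S
  rw [mul_zero] at this
  refine this.congr' ?_
  filter_upwards [eventually_ge_atTop 0] with x hx
  rw [sqrt_div' S hx]
  ring

lemma tendsto_one_sub_sqrt_div_mul_log_one_add_mul_rpow_sub (S : ℝ) (ha : 0 < a) (hs : 0 < s) :
    Tendsto (fun x => (1 - √(S / x)) * log (1 + a * x ^ s) - (log a + s * log x))
      atTop (𝓝 0) := by
  have hsqrt := tendsto_sqrt_div_mul_of_isLittleO_sqrt S <| by
    simpa only [← sqrt_eq_rpow] using isLittleO_log_one_add_mul_rpow ha hs one_half_pos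
  simpa [sub_mul, sub_right_comm] using (tendsto_log_one_add_mul_rpow_sub ha hs).sub hsqrt

theorem larger_blockage_eventually_better_general
    (c k s S₁ S₂ : ℝ) (hc : 0 < c) (hk : 0 < k) (hs : 0 < s)
    (hS : S₁ < S₂) :
    ∃ Λ : ℝ, ∀ lam : ℝ, Λ ≤ lam →
      (1 - Real.sqrt (S₂ / lam)) * Real.log (1 + c * Real.exp (k * S₂) * lam ^ s) >
      (1 - Real.sqrt (S₁ / lam)) * Real.log (1 + c * Real.exp (k * S₁) * lam ^ s) := by
  have ha (S : ℝ) : 0 < c * exp (k * S) := mul_pos hc (exp_pos _)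
  have hlog (S : ℝ) : log (c * exp (k * S)) = log c + k * S := by
    rw [log_mul hc.ne' (exp_pos _).ne', log_exp]
  have hgap : 0 < k * (S₂ - S₁) := mul_pos hk (sub_pos.2 hS)
  have hlim : Tendsto (fun x => (1 - √(S₂ / x)) * log (1 + c * exp (k * S₂) * x ^ s) -
      (1 - √(S₁ / x)) * log (1 + c * exp (k * S₁) * x ^ s)) atTop (𝓝 (k * (S₂ - S₁))) := by
    have := ((tendsto_one_sub_sqrt_div_mul_log_one_add_mul_rpow_sub S₂ (ha S₂) hs).sub
      (tendsto_one_sub_sqrt_div_mul_log_one_add_mul_rpow_sub S₁ (ha S₁) hs)).add_const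
        (k * (S₂ - S₁))
    rw [sub_zero, zero_add] at this
    refine this.congr fun x => ?_
    rw [hlog, hlog]
    ring
  obtain ⟨Λ, hΛ⟩ := eventually_atTop.1 (hlim.eventually (eventually_gt_nhds hgap))
  exact ⟨Λ, fun x hx => sub_pos.1 (hΛ x hx)⟩

/-- Larger blockage area eventually improves the outdoor mmWave bound:
for `c, k, s > 0` and `0 ≤ S₁ < S₂`, with
`h_S(λ) = (1 − √(S/λ))·log(1 + c·e^{k·S}·λ^s)`, there is `Λ` such that
`h_{S₂}(λ) > h_{S₁}(λ)` for all `λ ≥ Λ`. -/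
theorem larger_blockage_eventually_better
    (c k s S₁ S₂ : ℝ) (hc : 0 < c) (hk : 0 < k) (hs : 0 < s)
    (hS₁ : 0 ≤ S₁) (hS : S₁ < S₂) :
    ∃ Λ : ℝ, ∀ lam : ℝ, Λ ≤ lam →
      (1 - Real.sqrt (S₂ / lam)) * Real.log (1 + c * Real.exp (k * S₂) * lam ^ s) >
      (1 - Real.sqrt (S₁ / lam)) * Real.log (1 + c * Real.exp (k * S₁) * lam ^ s) :=
  larger_blockage_eventually_better_general c k s S₁ S₂ hc hk hs hS
end

section
/- Let λ > 0 and σ² > 0, and let r be a nonnegative real random variable with P(r > t) = exp(−π·λ·t²) for all t ≥ 0 (the nearest-point distance in a homogeneous PPP of density λ). Then E[r²] = 1/(π·λ), the random variable log(1 + r^{−2}/σ²) is integrable, and E[log(1 + r^{−2}/σ²)] ≥ log(1 + π·λ/σ²). -/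
/-!
With `X = r²`, the hypothesis says that `X` is exponentially distributed with rate `c = π λ`, so
`E[X] = 1/c` by the layer-cake formula. The same tail gives the small-ball bound
`P(X < t) ≤ c t`, hence `P(log⁺ X⁻¹ > s) ≤ c e^{-s}`, which makes `log⁺ X⁻¹` and therefore
`log(1 + X⁻¹/σ²) ≤ log 2 + log⁺ σ⁻² + log⁺ X⁻¹` integrable. Finally
`g(t) = log(1 + t⁻¹/σ²)` is convex on `(0, ∞)`, and Jensen's inequality in its supporting-line
form, applied at `E[X] = 1/c`, gives `E[g(X)] ≥ g(1/c) = log(1 + c/σ²)`.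
-/

open MeasureTheory Real Set
open scoped ENNReal

theorem lt_exp_neg_of_lt_posLog_inv {x s : ℝ} (hs : 0 < s) (h : s < log⁺ x⁻¹) :
    x < exp (-s) := by
  rcases le_or_gt x 0 with hx | hx
  · exact hx.trans_lt (exp_pos _)
  · rw [posLog_apply, lt_max_iff, log_inv] at h
    rw [← log_lt_iff_lt_exp hx]
    rcases h with h | h <;> linarith

theorem log_one_add_inv_div_le_posLog (x σ : ℝ) :
    log (1 + x⁻¹ / σ) ≤ log 2 + log⁺ σ⁻¹ + log⁺ x⁻¹ :=
  calc log (1 + x⁻¹ / σ)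
      ≤ log⁺ (1 + x⁻¹ * σ⁻¹) := by rw [← div_eq_mul_inv]; exact le_max_right _ _
    _ ≤ log 2 + log⁺ 1 + log⁺ (x⁻¹ * σ⁻¹) := posLog_add
    _ ≤ log 2 + log⁺ σ⁻¹ + log⁺ x⁻¹ := by
        linarith [posLog_one, posLog_mul (x := x⁻¹) (y := σ⁻¹)]

/-- `-(m * (σ * m + 1))⁻¹` is the derivative at `m` of the convex function
`t ↦ log (1 + t⁻¹ / σ)`. -/
theorem log_one_add_inv_div_tangent_le {σ m t : ℝ} (hσ : 0 < σ) (hm : 0 < m) (ht : 0 < t) :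
    log (1 + m⁻¹ / σ) + -(m * (σ * m + 1))⁻¹ * (t - m) ≤ log (1 + t⁻¹ / σ) := by
  have hA : 0 < 1 + t⁻¹ / σ := by positivity
  have hB : 0 < 1 + m⁻¹ / σ := by positivity
  have hdiff : log (1 + m⁻¹ / σ) - log (1 + t⁻¹ / σ) ≤ (t - m) / (m * (σ * m + 1)) :=
    calc log (1 + m⁻¹ / σ) - log (1 + t⁻¹ / σ)
        = log ((1 + m⁻¹ / σ) / (1 + t⁻¹ / σ)) := (log_div hB.ne' hA.ne').symm
      _ ≤ (1 + m⁻¹ / σ) / (1 + t⁻¹ / σ) - 1 := log_le_sub_one_of_pos (div_pos hB hA)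
      _ = (t - m) / (m * (σ * t + 1)) := by field_simp; ring
      _ ≤ (t - m) / (m * (σ * m + 1)) := by
          rw [div_le_div_iff₀ (by positivity) (by positivity)]
          nlinarith [mul_nonneg (mul_nonneg hm.le hσ.le) (sq_nonneg (t - m))]
  rw [neg_mul, ← div_eq_inv_mul]
  linarith

section

variable {Ω : Type*} [MeasurableSpace Ω] {μ : Measure Ω}

theorem integrable_of_meas_lt_le {Z : Ω → ℝ} {g : ℝ → ℝ} (hZm : AEMeasurable Z μ)
    (hZ : 0 ≤ᵐ[μ] Z) (hg : IntegrableOn g (Ioi 0))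
    (htail : ∀ s ∈ Ioi (0 : ℝ), μ {ω | s < Z ω} ≤ ENNReal.ofReal (g s)) :
    Integrable Z μ := by
  refine ⟨hZm.aestronglyMeasurable, ?_⟩
  rw [hasFiniteIntegral_iff_ofReal hZ, lintegral_eq_lintegral_meas_lt μ hZ hZm]
  exact (setLIntegral_mono' measurableSet_Ioi htail).trans_lt hg.lintegral_lt_top

theorem le_integral_comp_of_supporting_line [IsProbabilityMeasure μ] {X : Ω → ℝ} {g : ℝ → ℝ}
    (k : ℝ) (hX : Integrable X μ) (hgX : Integrable (fun ω => g (X ω)) μ)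
    (hsupp : ∀ᵐ ω ∂μ, g (∫ ω, X ω ∂μ) + k * (X ω - ∫ ω, X ω ∂μ) ≤ g (X ω)) :
    g (∫ ω, X ω ∂μ) ≤ ∫ ω, g (X ω) ∂μ := by
  set m := ∫ ω, X ω ∂μ
  have hdev : Integrable (fun ω => k * (X ω - m)) μ := (hX.sub (integrable_const m)).const_mul k
  calc g m
      = ∫ ω, g m + k * (X ω - m) ∂μ := by
        rw [integral_add (integrable_const _) hdev, integral_const_mul,
          integral_sub hX (integrable_const _)]
        simp [m]
    _ ≤ ∫ ω, g (X ω) ∂μ := integral_mono_ae ((integrable_const _).add hdev) hgX hsupp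

def HasExponentialTail (μ : Measure Ω) (X : Ω → ℝ) (c : ℝ) : Prop :=
  ∀ t, 0 ≤ t → μ {ω | t < X ω} = ENNReal.ofReal (exp (-c * t))

namespace HasExponentialTail

variable {X : Ω → ℝ} {c : ℝ}

theorem lintegral_ofReal_eq (h : HasExponentialTail μ X c) (hc : 0 < c)
    (hXm : AEMeasurable X μ) (hX : 0 ≤ᵐ[μ] X) :
    ∫⁻ ω, ENNReal.ofReal (X ω) ∂μ = ENNReal.ofReal c⁻¹ := by
  rw [lintegral_eq_lintegral_meas_lt μ hX hXm,
    setLIntegral_congr_fun measurableSet_Ioi fun t ht => h t (le_of_lt ht),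
    ← ofReal_integral_eq_lintegral_ofReal (integrableOn_exp_mul_Ioi (neg_lt_zero.2 hc) 0)
      (ae_of_all _ fun t => (exp_pos _).le),
    integral_exp_mul_Ioi (neg_lt_zero.2 hc)]
  simp

theorem integrable (h : HasExponentialTail μ X c) (hc : 0 < c) (hXm : AEMeasurable X μ)
    (hX : 0 ≤ᵐ[μ] X) : Integrable X μ := by
  refine ⟨hXm.aestronglyMeasurable, ?_⟩
  rw [hasFiniteIntegral_iff_ofReal hX, h.lintegral_ofReal_eq hc hXm hX]
  exact ENNReal.ofReal_lt_top

theorem integral_eq (h : HasExponentialTail μ X c) (hc : 0 < c) (hXm : AEMeasurable X μ)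
    (hX : 0 ≤ᵐ[μ] X) : ∫ ω, X ω ∂μ = c⁻¹ := by
  rw [integral_eq_lintegral_of_nonneg_ae hX hXm.aestronglyMeasurable,
    h.lintegral_ofReal_eq hc hXm hX, ENNReal.toReal_ofReal (inv_nonneg.2 hc.le)]

variable [IsProbabilityMeasure μ]

theorem ae_pos (h : HasExponentialTail μ X c) (hXm : AEMeasurable X μ) :
    ∀ᵐ ω ∂μ, 0 < X ω := by
  rw [ae_iff_measure_eq (nullMeasurableSet_lt aemeasurable_const hXm), measure_univ]
  simpa using h 0 le_rfl

theorem meas_lt_le (h : HasExponentialTail μ X c) (hXm : AEMeasurable X μ) {t : ℝ}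
    (ht : 0 ≤ t) : μ {ω | X ω < t} ≤ ENNReal.ofReal (c * t) :=
  calc μ {ω | X ω < t}
      ≤ μ {ω | t < X ω}ᶜ := measure_mono fun _ hlt hgt => lt_asymm (α := ℝ) hlt hgt
    _ = 1 - ENNReal.ofReal (exp (-c * t)) := by
        rw [prob_compl_eq_one_sub₀ (nullMeasurableSet_lt aemeasurable_const hXm), h t ht]
    _ ≤ ENNReal.ofReal (c * t) := by
        rw [← ENNReal.ofReal_one, ← ENNReal.ofReal_sub _ (exp_pos _).le]
        exact ENNReal.ofReal_le_ofReal (by linarith [add_one_le_exp (-c * t)])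

theorem integrable_posLog_inv (h : HasExponentialTail μ X c) (hXm : AEMeasurable X μ) :
    Integrable (fun ω => log⁺ (X ω)⁻¹) μ := by
  refine integrable_of_meas_lt_le (by fun_prop) (ae_of_all _ fun _ => posLog_nonneg)
    ((exp_neg_integrableOn_Ioi 0 one_pos).const_mul c) fun s hs => ?_
  calc μ {ω | s < log⁺ (X ω)⁻¹}
      ≤ μ {ω | X ω < exp (-s)} := measure_mono fun ω => lt_exp_neg_of_lt_posLog_inv hs
    _ ≤ ENNReal.ofReal (c * exp (-1 * s)) := by
        rw [neg_one_mul]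
        exact h.meas_lt_le hXm (exp_pos _).le

end HasExponentialTail

theorem MeasureTheory.Integrable.log_one_add_inv_div [IsFiniteMeasure μ] {X : Ω → ℝ} {σ : ℝ}
    (hσ : 0 ≤ σ) (hXm : AEMeasurable X μ) (hX : 0 ≤ᵐ[μ] X)
    (hlog : Integrable (fun ω => log⁺ (X ω)⁻¹) μ) :
    Integrable (fun ω => log (1 + (X ω)⁻¹ / σ)) μ := by
  refine ((integrable_const (log 2 + log⁺ σ⁻¹)).add hlog).mono'
    (measurable_log.comp_aemeasurable (by fun_prop)).aestronglyMeasurable ?_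
  filter_upwards [hX] with ω hω
  rw [norm_of_nonneg (log_nonneg (le_add_of_nonneg_right (div_nonneg (inv_nonneg.2 hω) hσ)))]
  exact log_one_add_inv_div_le_posLog _ _

end

/-- Lemma 4 (Downlink Indoor mmWave): if `r` is the distance to the nearest
point of a homogeneous PPP of density `λ`, i.e. `P(r > t) = e^{−π·λ·t²}` for
`t ≥ 0`, then `E[r²] = 1/(π·λ)`, `log(1 + r^{−2}/σ²)` is integrable, and
`E[log(1 + r^{−2}/σ²)] ≥ log(1 + π·λ/σ²)`. -/
theorem indoor_mmWave_spectral_efficiency_bound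
    {Ω : Type*} [MeasurableSpace Ω] (P : Measure Ω) [IsProbabilityMeasure P]
    (lam σsq : ℝ) (hlam : 0 < lam) (hσ : 0 < σsq)
    (r : Ω → ℝ) (hmeas : Measurable r) (hr : ∀ ω, 0 ≤ r ω)
    (hdist : ∀ t : ℝ, 0 ≤ t →
      P {ω | t < r ω} = ENNReal.ofReal (Real.exp (-(Real.pi * lam * t ^ 2)))) :
    (∫ ω, (r ω) ^ 2 ∂P = 1 / (Real.pi * lam)) ∧
    Integrable (fun ω => Real.log (1 + ((r ω) ^ 2)⁻¹ / σsq)) P ∧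
    ∫ ω, Real.log (1 + ((r ω) ^ 2)⁻¹ / σsq) ∂P ≥
      Real.log (1 + Real.pi * lam / σsq) := by
  set c := Real.pi * lam
  have hc : 0 < c := by positivity
  have hXm : AEMeasurable (fun ω => r ω ^ 2) P := (hmeas.pow_const 2).aemeasurable
  have hX : 0 ≤ᵐ[P] fun ω => r ω ^ 2 := ae_of_all _ fun ω => sq_nonneg (r ω)
  have htail : HasExponentialTail P (fun ω => r ω ^ 2) c := fun t ht => by
    have hsqrt : {ω | t < r ω ^ 2} = {ω | √t < r ω} := by
      ext ω
      rw [mem_ofPred_eq, mem_ofPred_eq, ← sqrt_lt_sqrt_iff ht, sqrt_sq (hr ω)]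
    rw [hsqrt, hdist _ (sqrt_nonneg t), sq_sqrt ht, neg_mul]
  have hEX := htail.integral_eq hc hXm hX
  have hYint := (htail.integrable_posLog_inv hXm).log_one_add_inv_div hσ.le hXm hX
  refine ⟨by rw [hEX, one_div], hYint, ?_⟩
  have hsupp := (htail.ae_pos hXm).mono fun ω hω =>
    log_one_add_inv_div_tangent_le hσ (inv_pos.2 hc) hω
  rw [← hEX] at hsupp
  have hjensen := le_integral_comp_of_supporting_line (g := fun t => log (1 + t⁻¹ / σsq)) _
    (htail.integrable hc hXm hX) hYint hsupp
  rwa [hEX, inv_inv] at hjensen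
end
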